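/- Under the same setup, with the additional assumption q_k - ps \ne 0 for all k, the identity \lambda_n(s) = (n+1) \sum_{k=1}^m (a_k q_k / (q_k - ps)) \lambda_{n+1}(s - q_k/p) holds for all n \ge 0. -/

import Mathlib

open PowerSeries Finset
noncomputable section

/-- Coefficient-wise composition `f ∘ g` of formal power series; this agrees with the
usual composition when `g` has zero constant term. -/
def scomp (f g : PowerSeries ℂ) : PowerSeries ℂ :=
  PowerSeries.mk fun N => ∑ n ∈ Finset.range (N + 1),
    (PowerSeries.coeff n f) * (PowerSeries.coeff N (g ^ n))

/-- The exponential series `∑ t^n/n!`. -/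
def expS : PowerSeries ℂ := PowerSeries.mk fun n => 1 / (n.factorial : ℂ)

/-- The series `log(1+t) = ∑_{n≥1} (-1)^{n+1} t^n / n`. -/
def logS : PowerSeries ℂ := PowerSeries.mk fun n => if n = 0 then 0 else (-1) ^ (n + 1) / (n : ℂ)

/-- Complex power `φ^q := exp (q · log φ)`, well defined when `φ` has constant term 1. -/
def cpow (φ : PowerSeries ℂ) (q : ℂ) : PowerSeries ℂ :=
  scomp expS (q • scomp logS (φ - 1))

/-- Formal derivative. -/
def D (f : PowerSeries ℂ) : PowerSeries ℂ :=
  PowerSeries.mk fun n => ((n + 1 : ℕ) : ℂ) * PowerSeries.coeff (n + 1) f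

/-- Generalized binomial coefficient `binom(t, k) = t(t-1)⋯(t-k+1)/k!`. -/
def gbinom (t : ℂ) (k : ℕ) : ℂ := (∏ j ∈ Finset.range k, (t - j)) / (k.factorial : ℂ)

/-- The ordinary Bell polynomial `B_{n,k}(x_1, …, x_{n-k+1})`. -/
def ordBell (n k : ℕ) (x : ℕ → ℂ) : ℂ :=
  ∑ i : Fin (n - k + 1) → Fin (n + 1),
    if (∑ j, (i j : ℕ)) = k ∧ (∑ j, (j.1 + 1) * (i j : ℕ)) = n then
      ((k.factorial : ℂ) / ∏ j, ((i j : ℕ).factorial : ℂ)) * ∏ j, x (j.1 + 1) ^ (i j : ℕ)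
    else 0


/-! Put `Λ_σ = ∑ λ_n(σ) tⁿ`, so that `w^σ = Λ_σ ∘ F`. From `w (w^σ)' = σ w' w^σ` and
`w^(s - q/p) = w^s w^(-q/p)`, the weights `c_k = a_k q_k / (q_k - p s)`, which satisfy
`c_k (s - q_k/p) = -a_k q_k/p`, make `G = ∑ c_k w^(s - q_k/p)` satisfy `G' = w^s F'`.
For `Ψ = ∑ c_k Λ_(s - q_k/p)` this reads `(Ψ' ∘ F) F' = (Λ_s ∘ F) F'`. Cancelling `F' ≠ 0`
and inverting the substitution by `F` (possible as `F'(0) ≠ 0`) gives `Ψ' = Λ_s`, and its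
`n`-th coefficient is the identity. -/

namespace PowerSeries

section CommRing

variable {R : Type*} [CommRing R]

theorem coeff_pow_eq_zero_of_lt {g : R⟦X⟧} (hg : constantCoeff g = 0) {N n : ℕ} (h : N < n) :
    coeff N (g ^ n) = 0 :=
  X_pow_dvd_iff.mp (pow_dvd_pow_of_dvd (X_dvd_iff.mpr hg) n) N h

theorem coeff_subst_eq_sum {f g : R⟦X⟧} (hg : constantCoeff g = 0) (N : ℕ) :
    coeff N (f.subst g) = ∑ n ∈ range (N + 1), coeff n f * coeff N (g ^ n) := by
  rw [coeff_subst' (HasSubst.of_constantCoeff_zero' hg)]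
  refine finsum_eq_sum_of_support_subset _ fun n hn => ?_
  rw [Function.mem_support] at hn
  rw [coe_range, Set.mem_Iio, Nat.lt_succ_iff]
  by_contra! hlt
  exact hn (by rw [coeff_pow_eq_zero_of_lt hg hlt, smul_zero])

theorem constantCoeff_subst_of_constantCoeff_eq_zero {f g : R⟦X⟧} (hg : constantCoeff g = 0) :
    constantCoeff (f.subst g) = constantCoeff f := by
  simpa using coeff_subst_eq_sum (f := f) hg 0

theorem subst_injective {F : R⟦X⟧} (hF0 : constantCoeff F = 0) (hF1 : IsUnit (coeff 1 F)) :
    Function.Injective (subst F : R⟦X⟧ → R⟦X⟧) := by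
  refine Function.LeftInverse.injective (g := subst (F.substInvOfIsUnit hF1)) fun f => ?_
  rw [subst_comp_subst_apply (HasSubst.of_constantCoeff_zero' hF0)
    (HasSubst.substInvOfIsUnit F hF1), subst_substInvOfIsUnit_right F hF0, X_subst]

end CommRing

variable {K : Type*} [Field K] [CharZero K]

theorem eq_of_derivative_eq_mul {u f g : K⟦X⟧} (hf : d⁄dX K f = u * f)
    (hg : d⁄dX K g = u * g) (h0 : constantCoeff f = constantCoeff g)
    (hg0 : constantCoeff g ≠ 0) : f = g := by
  have hinv : g⁻¹ * g = 1 := PowerSeries.inv_mul_cancel g hg0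
  have hquot : f * g⁻¹ = 1 := by
    refine derivative.ext ?_ (by simp [h0, hg0])
    rw [Derivation.leibniz, derivative_inv', hf, hg, derivative_one, smul_eq_mul, smul_eq_mul]
    linear_combination (-(u * f * g⁻¹)) * hinv
  calc f = f * g⁻¹ * g := by rw [mul_assoc, hinv, mul_one]
    _ = g := by rw [hquot, one_mul]

theorem derivative_exp_subst {A : K⟦X⟧} (hA : constantCoeff A = 0) :
    d⁄dX K ((exp K).subst A) = (exp K).subst A * d⁄dX K A := by
  rw [derivative_subst (HasSubst.of_constantCoeff_zero' hA), derivative_exp]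

theorem exp_subst_add {A B : K⟦X⟧} (hA : constantCoeff A = 0) (hB : constantCoeff B = 0) :
    (exp K).subst (A + B) = (exp K).subst A * (exp K).subst B := by
  have hAB : constantCoeff (A + B) = 0 := by rw [map_add, hA, hB, add_zero]
  refine eq_of_derivative_eq_mul (u := d⁄dX K (A + B)) ?_ ?_ ?_ ?_
  · rw [derivative_exp_subst hAB, mul_comm]
  · rw [Derivation.leibniz, derivative_exp_subst hA, derivative_exp_subst hB, map_add,
      smul_eq_mul, smul_eq_mul]
    ring
  · simp [constantCoeff_subst_of_constantCoeff_eq_zero, hA, hB, hAB]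
  · simp [constantCoeff_subst_of_constantCoeff_eq_zero, hA, hB]

theorem one_add_X_mul_derivative_log : (1 + X) * d⁄dX K (log K) = 1 := by
  ext n
  rw [deriv_log]
  cases n with
  | zero => simp
  | succ n => simp [add_mul, coeff_one, pow_succ]

theorem mul_derivative_logOf {f : K⟦X⟧} (hf : constantCoeff f = 1) :
    f * d⁄dX K (logOf f) = d⁄dX K f := by
  have hf1 : HasSubst (f - 1) := HasSubst.of_constantCoeff_zero' (by simp [hf])
  have h := congrArg (subst (f - 1)) (one_add_X_mul_derivative_log (K := K))
  rw [← coe_substAlgHom hf1, map_mul, map_add, map_one, coe_substAlgHom hf1, subst_X hf1,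
    add_sub_cancel] at h
  rw [logOf_eq, derivative_subst hf1, ← mul_assoc, h, one_mul, map_sub, derivative_one, sub_zero]

end PowerSeries

theorem scomp_eq_subst (f : ℂ⟦X⟧) {g : ℂ⟦X⟧} (hg : constantCoeff g = 0) :
    scomp f g = f.subst g := by
  ext N
  rw [coeff_subst_eq_sum hg, scomp, coeff_mk]

theorem expS_eq_exp : expS = exp ℂ := by
  ext n
  simp [expS]

theorem logS_eq_log : logS = log ℂ := by
  ext n
  simp [logS]

section cpow

variable {φ : ℂ⟦X⟧} (hφ : constantCoeff φ = 1)
include hφ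

theorem constantCoeff_smul_logOf (q : ℂ) : constantCoeff (q • logOf φ) = 0 := by
  simp [constantCoeff_logOf hφ]

theorem cpow_eq_exp_subst (q : ℂ) : cpow φ q = (exp ℂ).subst (q • logOf φ) := by
  have hφ1 : constantCoeff (φ - 1) = 0 := by rw [map_sub, hφ, map_one, sub_self]
  rw [cpow, expS_eq_exp, logS_eq_log, scomp_eq_subst _ hφ1, ← logOf_eq,
    scomp_eq_subst _ (constantCoeff_smul_logOf hφ q)]

theorem cpow_add (s t : ℂ) : cpow φ (s + t) = cpow φ s * cpow φ t := by
  rw [cpow_eq_exp_subst hφ, cpow_eq_exp_subst hφ, cpow_eq_exp_subst hφ, add_smul,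
    exp_subst_add (constantCoeff_smul_logOf hφ s) (constantCoeff_smul_logOf hφ t)]

theorem mul_derivative_cpow (s : ℂ) :
    φ * d⁄dX ℂ (cpow φ s) = s • (cpow φ s * d⁄dX ℂ φ) := by
  rw [cpow_eq_exp_subst hφ, derivative_exp_subst (constantCoeff_smul_logOf hφ s),
    Derivation.map_smul, mul_smul_comm, mul_smul_comm, mul_left_comm, mul_derivative_logOf hφ]

end cpow

theorem derivative_sum_smul_cpow_sub {ι : Type*} (S : Finset ι) {w : ℂ⟦X⟧}
    (hw : constantCoeff w = 1) {p s : ℂ} (hp : p ≠ 0) (a q : ι → ℂ)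
    (hq : ∀ k ∈ S, q k - p * s ≠ 0) :
    d⁄dX ℂ (∑ k ∈ S, (a k * q k / (q k - p * s)) • cpow w (s - q k / p)) =
      cpow w s * d⁄dX ℂ (∑ k ∈ S, a k • cpow w (-q k / p)) := by
  have hw0 : w ≠ 0 := fun h => by simp [h] at hw
  refine mul_left_cancel₀ hw0 ?_
  rw [map_sum, map_sum, Finset.mul_sum, Finset.mul_sum, Finset.mul_sum]
  refine Finset.sum_congr rfl fun k hk => ?_
  have hscalar : C (a k * q k / (q k - p * s)) * C (s - q k / p) = C (a k) * C (-q k / p) := by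
    rw [← map_mul, ← map_mul]
    congr 1
    field_simp [hq k hk]
    ring
  have hshift : cpow w (s - q k / p) = cpow w s * cpow w (-q k / p) := by
    rw [← cpow_add hw]
    ring_nf
  have h1 := mul_derivative_cpow hw (s - q k / p)
  have h2 := mul_derivative_cpow hw (-q k / p)
  rw [Derivation.map_smul, Derivation.map_smul]
  simp only [smul_eq_C_mul] at h1 h2 ⊢
  linear_combination C (a k * q k / (q k - p * s)) * h1 - C (a k) * cpow w s * h2
    + C (a k * q k / (q k - p * s)) * C (s - q k / p) * d⁄dX ℂ w * hshift
    + cpow w s * cpow w (-q k / p) * d⁄dX ℂ w * hscalar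

theorem stmt8_general (m : ℕ) (p : ℂ) (hp : p ≠ 0) (a q : ℕ → ℂ)
    (w F : PowerSeries ℂ) (hw : PowerSeries.constantCoeff w = 1)
    (hFdef : F = ∑ k ∈ Finset.Icc 1 m, a k • cpow w (-(q k) / p))
    (hF0 : PowerSeries.constantCoeff F = 0) (hF1 : PowerSeries.coeff 1 F ≠ 0)
    (lam : ℕ → ℂ → ℂ)
    (hlam : ∀ (s : ℂ) (N : ℕ), PowerSeries.coeff N (cpow w s) =
      ∑ n ∈ Finset.range (N + 1), lam n s * PowerSeries.coeff N (F ^ n)) :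
    ∀ (n : ℕ) (s : ℂ), (∀ k ∈ Finset.Icc 1 m, q k - p * s ≠ 0) →
      lam n s = ((n : ℂ) + 1) *
        ∑ k ∈ Finset.Icc 1 m, a k * q k / (q k - p * s) * lam (n + 1) (s - q k / p) := by
  intro n s hq
  have hF : HasSubst F := HasSubst.of_constantCoeff_zero' hF0
  set Λ : ℂ → ℂ⟦X⟧ := fun σ => mk fun j => lam j σ
  have hcpow : ∀ σ, cpow w σ = (Λ σ).subst F := fun σ => by
    rw [← scomp_eq_subst _ hF0]
    ext N
    simp [scomp, Λ, hlam]
  set Ψ := ∑ k ∈ Finset.Icc 1 m, (a k * q k / (q k - p * s)) • Λ (s - q k / p)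
  have hΨ : Ψ.subst F =
      ∑ k ∈ Finset.Icc 1 m, (a k * q k / (q k - p * s)) • cpow w (s - q k / p) := by
    simp only [hcpow, Ψ, ← coe_substAlgHom hF, map_sum, map_smul]
  have hderiv : (d⁄dX ℂ Ψ).subst F * d⁄dX ℂ F = (Λ s).subst F * d⁄dX ℂ F := by
    rw [← derivative_subst hF, hΨ, derivative_sum_smul_cpow_sub _ hw hp _ _ hq, ← hFdef, hcpow]
  have hdF : d⁄dX ℂ F ≠ 0 := fun h =>
    hF1 (by simpa [coeff_derivative] using congrArg (coeff 0) h)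
  have hΛ := congrArg (coeff n) (subst_injective hF0 hF1.isUnit (mul_right_cancel₀ hdF hderiv))
  simp only [map_sum, Derivation.map_smul, map_smul, coeff_derivative, coeff_mk, smul_eq_mul,
    Ψ, Λ] at hΛ
  rw [← hΛ, Finset.mul_sum]
  exact Finset.sum_congr rfl fun k _ => by ring

/-- The identity `λ_n(s) = (n+1) ∑_{k=1}^m (a_k q_k/(q_k - ps)) λ_{n+1}(s - q_k/p)`. -/
theorem stmt8 (m : ℕ) (hm : 1 ≤ m) (p : ℂ) (hp : p ≠ 0) (a q : ℕ → ℂ)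
    (hsum : ∑ k ∈ Finset.Icc 1 m, a k = 0)
    (hc1 : ∑ k ∈ Finset.Icc 1 m, a k * q k ≠ 0)
    (w F : PowerSeries ℂ) (hw : PowerSeries.constantCoeff w = 1)
    (hFdef : F = ∑ k ∈ Finset.Icc 1 m, a k • cpow w (-(q k) / p))
    (hF0 : PowerSeries.constantCoeff F = 0) (hF1 : PowerSeries.coeff 1 F ≠ 0)
    (lam : ℕ → ℂ → ℂ) (hlam0 : ∀ s : ℂ, lam 0 s = 1)
    (hlam : ∀ (s : ℂ) (N : ℕ), PowerSeries.coeff N (cpow w s) =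
      ∑ n ∈ Finset.range (N + 1), lam n s * PowerSeries.coeff N (F ^ n)) :
    ∀ (n : ℕ) (s : ℂ), (∀ k ∈ Finset.Icc 1 m, q k - p * s ≠ 0) →
      lam n s = ((n : ℂ) + 1) *
        ∑ k ∈ Finset.Icc 1 m, a k * q k / (q k - p * s) * lam (n + 1) (s - q k / p) :=
  stmt8_general m p hp a q w F hw hFdef hF0 hF1 lam hlam
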